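/- arXiv:1711.00200 — 3 statements merged into one kernel-verified Lean document; each statement's English description precedes it below -/
import Mathlib

section
/- For K ≥ 6, the infimum of 𝓔₂(h) over admissible h with ∫_{-∞}^0 |h|² = 1 equals 25/4; in particular the bound 𝓔₂(h) ≥ (25/4)‖h‖²_{L²} is sharp, as witnessed by the sequence h_ε(z) = √(2ε) e^{εz} with ε → 0⁺. -/
open Real Set MeasureTheory Filter

private lemma expc_interval (c a b : ℝ) (hc : c ≠ 0) :
    ∫ x in a..b, Real.exp (c * x) = (Real.exp (c * b) - Real.exp (c * a)) / c := by
  have D : ∀ x : ℝ, HasDerivAt (fun y : ℝ => Real.exp (c * y) / c) (Real.exp (c * x)) x := by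
    intro x
    have : HasDerivAt (fun y : ℝ => Real.exp (c * y)) (Real.exp (c * x) * c) x := by
      simpa using (((hasDerivAt_id x).const_mul c).exp)
    simpa [mul_div_assoc, mul_div_cancel_right₀ _ hc] using this.div_const c
  rw [intervalIntegral.integral_eq_sub_of_hasDerivAt (fun x _ => D x)
    ((Real.continuous_exp.comp (continuous_const.mul continuous_id)).intervalIntegrable a b)]
  ring

private lemma expc_integrableOn {c : ℝ} (hc : 0 < c) :
    IntegrableOn (fun z => Real.exp (c * z)) (Set.Iic 0) := by
  have hcont : Continuous fun z : ℝ => Real.exp (c * z) :=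
    Real.continuous_exp.comp (continuous_const.mul continuous_id)
  apply MeasureTheory.integrableOn_Iic_of_intervalIntegral_norm_bounded (1/c) 0
    (a := fun n : ℕ => -(n : ℝ)) (l := atTop)
  · intro i
    exact hcont.integrableOn_Ioc
  · exact tendsto_neg_atBot_iff.mpr tendsto_natCast_atTop_atTop
  · filter_upwards with n
    have : ∫ x in (-(n:ℝ))..0, ‖Real.exp (c * x)‖ = ∫ x in (-(n:ℝ))..0, Real.exp (c * x) := by
      simp [Real.norm_eq_abs, abs_of_pos (Real.exp_pos _)]
    rw [this, expc_interval c _ _ hc.ne']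
    rw [div_le_div_iff₀ hc hc]
    have h0 : Real.exp (c * 0) = 1 := by norm_num
    nlinarith [Real.exp_pos (c * (-(n:ℝ)))]

private lemma expc_integral {c : ℝ} (hc : 0 < c) :
    ∫ z in Set.Iic (0:ℝ), Real.exp (c * z) = 1 / c := by
  have D : ∀ x : ℝ, HasDerivAt (fun y : ℝ => Real.exp (c * y) / c) (Real.exp (c * x)) x := by
    intro x
    have : HasDerivAt (fun y : ℝ => Real.exp (c * y)) (Real.exp (c * x) * c) x := by
      simpa using (((hasDerivAt_id x).const_mul c).exp)
    simpa [mul_div_assoc, mul_div_cancel_right₀ _ hc.ne'] using this.div_const c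
  have hlim : Tendsto (fun y : ℝ => Real.exp (c * y) / c) atBot (nhds 0) := by
    have h1 : Tendsto (fun y : ℝ => c * y) atBot atBot := by
      exact (tendsto_const_mul_atBot_of_pos hc).2 tendsto_id
    have := (Real.tendsto_exp_atBot.comp h1).div_const c
    simpa using this
  have := MeasureTheory.integral_Iic_of_hasDerivAt_of_tendsto' (a := (0:ℝ))
    (fun x _ => D x) (expc_integrableOn hc) hlim
  rw [this]
  simp

/-- For `K ≥ 6`, the infimum of the penalized energy over admissible
`L²`-normalized `h` equals `25/4` (i.e. `25/4` is the greatest lower bound). -/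
theorem energy_infimum_eq
    (K : ℝ) (hK : 6 ≤ K) :
    IsGLB
      {E : ℝ | ∃ h : ℝ → ℝ, ContDiff ℝ 1 h ∧
        IntegrableOn (fun z => (h z) ^ 2) (Set.Iic 0) ∧
        IntegrableOn (fun z => (deriv h z) ^ 2) (Set.Iic 0) ∧
        Tendsto h atBot (nhds 0) ∧
        (∫ z in Set.Iic (0:ℝ), (h z) ^ 2) = 1 ∧
        E = (∫ z in Set.Iic (0:ℝ), ((deriv h z) ^ 2 + (25/4) * (h z) ^ 2))
              + (1/2) * (K - 6) * (h 0) ^ 2}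
      (25/4) := by
  constructor
  · -- lower bound
    rintro E ⟨h, _, hh2, hd2, _, hnorm, rfl⟩
    have hsplit : (∫ z in Set.Iic (0:ℝ), ((deriv h z) ^ 2 + (25/4) * (h z) ^ 2))
        = (∫ z in Set.Iic (0:ℝ), (deriv h z) ^ 2)
          + (∫ z in Set.Iic (0:ℝ), (25/4) * (h z) ^ 2) :=
      MeasureTheory.integral_add hd2 (hh2.const_mul _)
    have h1 : (0:ℝ) ≤ ∫ z in Set.Iic (0:ℝ), (deriv h z) ^ 2 :=
      MeasureTheory.integral_nonneg fun z => sq_nonneg _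
    have h2 : (∫ z in Set.Iic (0:ℝ), (25/4) * (h z) ^ 2) = 25/4 := by
      rw [MeasureTheory.integral_const_mul, hnorm, mul_one]
    have h3 : (0:ℝ) ≤ (1/2) * (K - 6) * (h 0) ^ 2 := by
      have : (0:ℝ) ≤ K - 6 := by linarith
      positivity
    rw [hsplit, h2]
    linarith
  · -- greatest lower bound
    intro b hb
    refine le_of_forall_pos_le_add fun δ hδ => ?_
    set ε : ℝ := min 1 (δ / (K - 5)) with hεdef
    have hK5 : (0:ℝ) < K - 5 := by linarith
    have hε : 0 < ε := lt_min one_pos (by positivity)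
    have hε1 : ε ≤ 1 := min_le_left _ _
    have hεδ : ε ≤ δ / (K - 5) := min_le_right _ _
    set h : ℝ → ℝ := fun z => Real.sqrt (2 * ε) * Real.exp (ε * z) with hdef
    have h2ε : (0:ℝ) ≤ 2 * ε := by positivity
    have hsq : Real.sqrt (2 * ε) ^ 2 = 2 * ε := Real.sq_sqrt h2ε
    have hD : ∀ z : ℝ, HasDerivAt h (Real.sqrt (2 * ε) * (Real.exp (ε * z) * ε)) z := by
      intro z
      have : HasDerivAt (fun y : ℝ => Real.exp (ε * y)) (Real.exp (ε * z) * ε) z := by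
        simpa using (((hasDerivAt_id z).const_mul ε).exp)
      exact this.const_mul (Real.sqrt (2 * ε))
    have hderiv : ∀ z : ℝ, deriv h z = Real.sqrt (2 * ε) * (Real.exp (ε * z) * ε) :=
      fun z => (hD z).deriv
    have hhsq : ∀ z : ℝ, (h z) ^ 2 = 2 * ε * Real.exp (2 * ε * z) := by
      intro z
      have : Real.exp (ε * z) ^ 2 = Real.exp (2 * ε * z) := by
        rw [sq, ← Real.exp_add]; ring_nf
      simp only [hdef, mul_pow, hsq, this]
    have hdsq : ∀ z : ℝ, (deriv h z) ^ 2 = ε ^ 2 * (2 * ε * Real.exp (2 * ε * z)) := by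
      intro z
      rw [hderiv z]
      have : Real.exp (ε * z) ^ 2 = Real.exp (2 * ε * z) := by
        rw [sq, ← Real.exp_add]; ring_nf
      rw [mul_pow, mul_pow, hsq, this]; ring
    have h2εpos : (0:ℝ) < 2 * ε := by positivity
    have hint : IntegrableOn (fun z => Real.exp (2 * ε * z)) (Set.Iic 0) :=
      expc_integrableOn h2εpos
    have hival : ∫ z in Set.Iic (0:ℝ), Real.exp (2 * ε * z) = 1 / (2 * ε) :=
      expc_integral h2εpos
    have hh2 : IntegrableOn (fun z => (h z) ^ 2) (Set.Iic 0) := by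
      exact IntegrableOn.congr_fun (hint.const_mul (2 * ε))
        (fun z _ => (hhsq z).symm) measurableSet_Iic
    have hd2 : IntegrableOn (fun z => (deriv h z) ^ 2) (Set.Iic 0) := by
      refine IntegrableOn.congr_fun ((hint.const_mul (2 * ε)).const_mul (ε ^ 2))
        (fun z _ => (hdsq z).symm) measurableSet_Iic
    have hnorm : (∫ z in Set.Iic (0:ℝ), (h z) ^ 2) = 1 := by
      simp only [hhsq]
      rw [MeasureTheory.integral_const_mul, hival]
      field_simp
    have hdint : (∫ z in Set.Iic (0:ℝ), (deriv h z) ^ 2) = ε ^ 2 := by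
      simp only [hdsq]
      rw [MeasureTheory.integral_const_mul, MeasureTheory.integral_const_mul, hival]
      field_simp
    have hcd : ContDiff ℝ 1 h :=
      contDiff_const.mul ((contDiff_const.mul contDiff_id).exp)
    have htend : Tendsto h atBot (nhds 0) := by
      have h1 : Tendsto (fun z : ℝ => ε * z) atBot atBot :=
        (tendsto_const_mul_atBot_of_pos hε).2 tendsto_id
      have := (Real.tendsto_exp_atBot.comp h1).const_mul (Real.sqrt (2 * ε))
      simpa [hdef, Function.comp] using this
    have hmem : (∫ z in Set.Iic (0:ℝ), ((deriv h z) ^ 2 + (25/4) * (h z) ^ 2))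
          + (1/2) * (K - 6) * (h 0) ^ 2 ∈
        {E : ℝ | ∃ h : ℝ → ℝ, ContDiff ℝ 1 h ∧
          IntegrableOn (fun z => (h z) ^ 2) (Set.Iic 0) ∧
          IntegrableOn (fun z => (deriv h z) ^ 2) (Set.Iic 0) ∧
          Tendsto h atBot (nhds 0) ∧
          (∫ z in Set.Iic (0:ℝ), (h z) ^ 2) = 1 ∧
          E = (∫ z in Set.Iic (0:ℝ), ((deriv h z) ^ 2 + (25/4) * (h z) ^ 2))
                + (1/2) * (K - 6) * (h 0) ^ 2} :=
      ⟨h, hcd, hh2, hd2, htend, hnorm, rfl⟩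
    have hval : (∫ z in Set.Iic (0:ℝ), ((deriv h z) ^ 2 + (25/4) * (h z) ^ 2))
          + (1/2) * (K - 6) * (h 0) ^ 2
        = ε ^ 2 + 25/4 + (K - 6) * ε := by
      rw [MeasureTheory.integral_add hd2 (hh2.const_mul _), hdint,
        MeasureTheory.integral_const_mul, hnorm]
      have h0 : (h 0) ^ 2 = 2 * ε := by
        rw [hhsq 0]; simp
      rw [h0]; ring
    have hble := hb hmem
    rw [hval] at hble
    have hsmall : ε ^ 2 + (K - 6) * ε ≤ δ := by
      have h1 : ε ^ 2 ≤ ε := by nlinarith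
      have h2 : ε * (K - 5) ≤ δ := by
        calc ε * (K - 5) ≤ (δ / (K - 5)) * (K - 5) := by
              apply mul_le_mul_of_nonneg_right hεδ hK5.le
          _ = δ := by field_simp
      nlinarith
    linarith
end

section
/- For K < 6, the energy 𝓔₂(h) = ∫_{-∞}^0 ((h')² + (25/4)h²) dz + (1/2)(K-6) h(0)² satisfies 𝓔₂(h) ≥ (25/4 - (6-K)²/4) ∫_{-∞}^0 h² dz for all admissible h, with equality for h = h₁(z) = e^{(6-K)z/2} normalized in L². -/
/-! For every real `a`, expanding `0 ≤ ∫_{-∞}^0 (h' - a h)²` and using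
`∫_{-∞}^0 2 h h' = h(0)²` gives `∫ h'² ≥ a h(0)² - a² ∫ h²`. With `a = (6 - K)/2` this is
the bound, and `h₁ = e^{a z}` satisfies `h₁' = a h₁`, so it attains it. -/

open Real Set MeasureTheory Filter

lemma MeasureTheory.Integrable.mul_of_integrable_sq {α : Type*} [MeasurableSpace α]
    {μ : Measure α} {f g : α → ℝ} (hf : AEStronglyMeasurable f μ)
    (hg : AEStronglyMeasurable g μ) (hf2 : Integrable (fun x => f x ^ 2) μ)
    (hg2 : Integrable (fun x => g x ^ 2) μ) :
    Integrable (f * g) μ :=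
  ((memLp_two_iff_integrable_sq hf).2 hf2).integrable_mul
    ((memLp_two_iff_integrable_sq hg).2 hg2)

lemma integral_sq_add_const_mul_sq {s : Set ℝ} {f g : ℝ → ℝ} (c : ℝ)
    (hf : IntegrableOn (fun x => f x ^ 2) s) (hg : IntegrableOn (fun x => g x ^ 2) s) :
    ∫ x in s, (f x ^ 2 + c * g x ^ 2) = (∫ x in s, f x ^ 2) + c * ∫ x in s, g x ^ 2 := by
  rw [integral_add hf (hg.const_mul c), integral_const_mul]

lemma integral_Iic_mul_deriv_eq_sq_div_two {h h' : ℝ → ℝ} {b : ℝ}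
    (hderiv : ∀ x ∈ Iic b, HasDerivAt h (h' x) x)
    (hint : IntegrableOn (fun x => h x * h' x) (Iic b)) (hlim : Tendsto h atBot (nhds 0)) :
    ∫ x in Iic b, h x * h' x = h b ^ 2 / 2 := by
  have hderiv_sq : ∀ x ∈ Iic b, HasDerivAt (fun z => h z ^ 2 / 2) (h x * h' x) x := fun x hx =>
    (((hderiv x hx).pow 2).div_const 2).congr_deriv (by push_cast; ring)
  have hlim_sq : Tendsto (fun z => h z ^ 2 / 2) atBot (nhds 0) := by
    simpa using (hlim.pow 2).div_const 2
  simpa using integral_Iic_of_hasDerivAt_of_tendsto' hderiv_sq hint hlim_sq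

lemma integral_Iic_deriv_sq_ge {h : ℝ → ℝ} (a b : ℝ) (hd : Differentiable ℝ h)
    (hh : IntegrableOn (fun x => h x ^ 2) (Iic b))
    (hh' : IntegrableOn (fun x => deriv h x ^ 2) (Iic b)) (hlim : Tendsto h atBot (nhds 0)) :
    a * h b ^ 2 - a ^ 2 * ∫ x in Iic b, h x ^ 2 ≤ ∫ x in Iic b, deriv h x ^ 2 := by
  have hmul : IntegrableOn (fun x => h x * deriv h x) (Iic b) :=
    Integrable.mul_of_integrable_sq hd.continuous.aestronglyMeasurable
      (aestronglyMeasurable_deriv h _) hh hh'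
  have hcross : ∫ x in Iic b, h x * deriv h x = h b ^ 2 / 2 :=
    integral_Iic_mul_deriv_eq_sq_div_two (fun x _ => (hd x).hasDerivAt) hmul hlim
  have hexpand : ∫ x in Iic b, (deriv h x - a * h x) ^ 2
      = (∫ x in Iic b, deriv h x ^ 2) - 2 * a * (∫ x in Iic b, h x * deriv h x)
        + a ^ 2 * ∫ x in Iic b, h x ^ 2 := by
    have hpoint : (fun x => (deriv h x - a * h x) ^ 2)
        = fun x => deriv h x ^ 2 - 2 * a * (h x * deriv h x) + a ^ 2 * h x ^ 2 := by
      ext x; ring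
    have hdiff : IntegrableOn (fun x => deriv h x ^ 2 - 2 * a * (h x * deriv h x)) (Iic b) :=
      hh'.sub (hmul.const_mul _)
    rw [hpoint, integral_add hdiff (hh.const_mul _), integral_sub hh' (hmul.const_mul _),
      integral_const_mul, integral_const_mul]
  have hnonneg : 0 ≤ ∫ x in Iic b, (deriv h x - a * h x) ^ 2 :=
    integral_nonneg fun x => sq_nonneg _
  rw [hcross] at hexpand
  linarith

lemma integral_Iic_exp_mul_sq {a : ℝ} (ha : 0 < a) (c : ℝ) :
    ∫ x in Iic c, exp (a * x) ^ 2 = exp (2 * a * c) / (2 * a) := by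
  simp_rw [← exp_nat_mul]
  push_cast
  simp_rw [← mul_assoc]
  exact integral_exp_mul_Iic (by positivity) c

lemma integrableOn_Iic_exp_mul_sq {a : ℝ} (ha : 0 < a) (c : ℝ) :
    IntegrableOn (fun x => exp (a * x) ^ 2) (Iic c) := by
  simp_rw [← exp_nat_mul]
  push_cast
  simp_rw [← mul_assoc]
  exact integrableOn_exp_mul_Iic (by positivity) c

lemma deriv_exp_mul (a : ℝ) : deriv (fun x => exp (a * x)) = fun x => a * exp (a * x) := by
  ext x
  simpa [mul_comm] using ((hasDerivAt_id x).const_mul a).exp.deriv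

/-- For `K < 6`, the penalized energy dominates `(25/4 - (6-K)²/4)‖h‖²` for all
admissible `h`, with equality for `h₁(z) = e^{(6-K)z/2}`. -/
theorem energy_lower_bound_K_lt_six (K : ℝ) (hK : K < 6) :
    (∀ h : ℝ → ℝ, ContDiff ℝ 1 h →
      IntegrableOn (fun z => (h z) ^ 2) (Set.Iic 0) →
      IntegrableOn (fun z => (deriv h z) ^ 2) (Set.Iic 0) →
      Tendsto h atBot (nhds 0) →
      (∫ z in Set.Iic (0:ℝ), ((deriv h z) ^ 2 + (25/4) * (h z) ^ 2))
          + (1/2) * (K - 6) * (h 0) ^ 2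
        ≥ (25/4 - (6-K)^2/4) * ∫ z in Set.Iic (0:ℝ), (h z) ^ 2) ∧
    ((∫ z in Set.Iic (0:ℝ),
        ((deriv (fun z => Real.exp ((6-K)/2 * z)) z) ^ 2
          + (25/4) * (Real.exp ((6-K)/2 * z)) ^ 2))
        + (1/2) * (K - 6) * (Real.exp ((6-K)/2 * 0)) ^ 2
      = (25/4 - (6-K)^2/4)
          * ∫ z in Set.Iic (0:ℝ), (Real.exp ((6-K)/2 * z)) ^ 2) := by
  have ha : 0 < (6 - K) / 2 := by linarith
  have hK' : 6 - K ≠ 0 := by linarith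
  refine ⟨fun h hC1 hh hh' hlim => ?_, ?_⟩
  · rw [integral_sq_add_const_mul_sq _ hh' hh]
    linarith [integral_Iic_deriv_sq_ge ((6 - K) / 2) 0 (hC1.differentiable one_ne_zero)
      hh hh' hlim]
  · have hexp := integrableOn_Iic_exp_mul_sq ha 0
    have hderiv := deriv_exp_mul ((6 - K) / 2)
    have hexp' :
        IntegrableOn (fun x => deriv (fun z => exp ((6 - K) / 2 * z)) x ^ 2) (Iic 0) := by
      simp_rw [hderiv, mul_pow]
      exact hexp.const_mul _
    rw [integral_sq_add_const_mul_sq _ hexp' hexp, hderiv]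
    simp only [mul_pow, integral_const_mul, integral_Iic_exp_mul_sq ha, mul_zero, exp_zero]
    field_simp
    ring
end

section
/- Explicit evaluation: for ε > 0 and K ∈ ℝ, the test function h_ε(z) = √(2ε) e^{εz} gives 𝓔₂^K(h_ε) = 25/4 + ε² + (K-6)ε; hence if K > 6 and ε is small, 𝓔₂^K(h_ε) > 25/4, while 𝓔₂^K(h_ε) → 25/4 as ε → 0⁺. -/
open Real Set MeasureTheory Filter

lemma integral_exp_mul_Iic_zero {c : ℝ} (hc : 0 < c) :
    ∫ z in Set.Iic (0:ℝ), Real.exp (c*z) = 1/c := by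
  have h1 : (∫ x in Set.Iic (0:ℝ), (fun x => Real.exp (-(c*x))) (-x))
      = ∫ x in Set.Ioi (-(0:ℝ)), (fun x => Real.exp (-(c*x))) x :=
    integral_comp_neg_Iic 0 (fun x => Real.exp (-(c*x)))
  simp only [mul_neg, neg_neg, neg_zero] at h1
  rw [h1]
  have h2 := integral_comp_mul_right_Ioi (fun x => Real.exp (-x)) 0 hc
  simp only [zero_mul, smul_eq_mul, integral_exp_neg_Ioi_zero, mul_one] at h2
  have : ∀ x : ℝ, Real.exp (-(c*x)) = (fun x => Real.exp (-x)) (x * c) := by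
    intro x; simp [mul_comm]
  rw [show (fun x : ℝ => Real.exp (-(c*x))) = fun x => Real.exp (-(x*c)) by
    funext x; rw [mul_comm]]
  rw [h2, one_div]

lemma energy_eval (K ε : ℝ) (hε : 0 < ε) :
    (∫ z in Set.Iic (0:ℝ),
        ((deriv (fun z => Real.sqrt (2*ε) * Real.exp (ε*z)) z) ^ 2
          + (25/4) * (Real.sqrt (2*ε) * Real.exp (ε*z)) ^ 2))
      + (1/2) * (K - 6) * (Real.sqrt (2*ε) * Real.exp (ε*(0:ℝ))) ^ 2
    = 25/4 + ε ^ 2 + (K - 6) * ε := by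
  have hd : ∀ z : ℝ, deriv (fun z => Real.sqrt (2*ε) * Real.exp (ε*z)) z
      = Real.sqrt (2*ε) * (ε * Real.exp (ε*z)) := by
    intro z
    have h : HasDerivAt (fun z : ℝ => Real.sqrt (2*ε) * Real.exp (ε*z))
        (Real.sqrt (2*ε) * (Real.exp (ε*z) * ε)) z := by
      have h0 : HasDerivAt (fun z : ℝ => ε * z) ε z := by
        simpa using (hasDerivAt_id z).const_mul ε
      simpa using (h0.exp).const_mul (Real.sqrt (2*ε))
    rw [h.deriv]; ring
  have hsq : Real.sqrt (2*ε) ^ 2 = 2*ε := Real.sq_sqrt (by linarith)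
  have hint : ∀ z : ℝ,
      ((deriv (fun z => Real.sqrt (2*ε) * Real.exp (ε*z)) z) ^ 2
        + (25/4) * (Real.sqrt (2*ε) * Real.exp (ε*z)) ^ 2)
      = (2*ε*(ε^2 + 25/4)) * Real.exp ((2*ε)*z) := by
    intro z
    rw [hd z]
    have : Real.exp ((2*ε)*z) = Real.exp (ε*z) * Real.exp (ε*z) := by
      rw [← Real.exp_add]; ring_nf
    rw [this]
    nlinarith [Real.exp_pos (ε*z), hsq]
  rw [MeasureTheory.setIntegral_congr_fun measurableSet_Iic (fun z _ => hint z),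
    MeasureTheory.integral_const_mul, integral_exp_mul_Iic_zero (by linarith : (0:ℝ) < 2*ε)]
  rw [mul_zero, Real.exp_zero, mul_one, hsq]
  field_simp
  ring

/-- Explicit evaluation of the penalized energy on `h_ε(z) = √(2ε) e^{εz}`:
it equals `25/4 + ε² + (K-6)ε`, exceeds `25/4` when `K > 6`, and tends to
`25/4` as `ε → 0⁺`. -/
theorem energy_on_test_functions (K : ℝ) :
    (∀ ε > (0:ℝ),
      (∫ z in Set.Iic (0:ℝ),
          ((deriv (fun z => Real.sqrt (2*ε) * Real.exp (ε*z)) z) ^ 2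
            + (25/4) * (Real.sqrt (2*ε) * Real.exp (ε*z)) ^ 2))
        + (1/2) * (K - 6) * (Real.sqrt (2*ε) * Real.exp (ε*(0:ℝ))) ^ 2
      = 25/4 + ε ^ 2 + (K - 6) * ε) ∧
    (K > 6 → ∀ ε > (0:ℝ),
      (∫ z in Set.Iic (0:ℝ),
          ((deriv (fun z => Real.sqrt (2*ε) * Real.exp (ε*z)) z) ^ 2
            + (25/4) * (Real.sqrt (2*ε) * Real.exp (ε*z)) ^ 2))
        + (1/2) * (K - 6) * (Real.sqrt (2*ε) * Real.exp (ε*(0:ℝ))) ^ 2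
      > 25/4) ∧
    Tendsto (fun ε : ℝ =>
      (∫ z in Set.Iic (0:ℝ),
          ((deriv (fun z => Real.sqrt (2*ε) * Real.exp (ε*z)) z) ^ 2
            + (25/4) * (Real.sqrt (2*ε) * Real.exp (ε*z)) ^ 2))
        + (1/2) * (K - 6) * (Real.sqrt (2*ε) * Real.exp (ε*(0:ℝ))) ^ 2)
      (nhdsWithin 0 (Set.Ioi 0)) (nhds (25/4)) := by
  refine ⟨fun ε hε => energy_eval K ε hε, fun hK ε hε => ?_, ?_⟩
  · rw [energy_eval K ε hε]; nlinarith
  · have heq : (fun ε : ℝ => 25/4 + ε ^ 2 + (K - 6) * ε) =ᶠ[nhdsWithin 0 (Set.Ioi 0)]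
        (fun ε : ℝ =>
          (∫ z in Set.Iic (0:ℝ),
              ((deriv (fun z => Real.sqrt (2*ε) * Real.exp (ε*z)) z) ^ 2
                + (25/4) * (Real.sqrt (2*ε) * Real.exp (ε*z)) ^ 2))
            + (1/2) * (K - 6) * (Real.sqrt (2*ε) * Real.exp (ε*(0:ℝ))) ^ 2) := by
      filter_upwards [self_mem_nhdsWithin] with ε hε
      exact (energy_eval K ε hε).symm
    refine Tendsto.congr' heq ?_
    have : Tendsto (fun ε : ℝ => 25/4 + ε ^ 2 + (K - 6) * ε) (nhds 0) (nhds (25/4)) := by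
      have hc : Continuous (fun ε : ℝ => 25/4 + ε ^ 2 + (K - 6) * ε) := by continuity
      have := hc.tendsto 0
      simpa using this
    exact this.mono_left nhdsWithin_le_nhds
end
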